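/- arXiv:1405.1738 — 3 statements merged into one kernel-verified Lean document; each statement's English description precedes it below -/
import Mathlib

section
/- If P and Q are complex polynomials with P(0) ≠ 0 or Q(0) ≠ 0 (i.e., the fraction P/Q is in lowest terms has min(p₀,q₀)=0 for multiplicities at 0), P has degree p with a root of multiplicity p₀ at 0, Q has degree q with a root of multiplicity q₀ at 0, P·Q ≠ 0, and α ∈ (0,1), then the polynomial z(P'Q - PQ') + αPQ has degree exactly p + q, and its multiplicity of zero at the origin is exactly p₀ + q₀. -/
/-!
Write `θ = X · d/dX`, so that `θ` multiplies the coefficient of `X^k` by `k`, and the polynomial is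
`θP · Q - P · θQ + α P Q`. Its coefficient of `X^(p+q)` is `(p - q + α)` times the product of the
leading coefficients. At the origin, writing `P = P₁ X^p₀` and `Q = Q₁ X^q₀` with `P₁(0), Q₁(0) ≠ 0`,
the polynomial is `X^(p₀+q₀)` times the same expression for `P₁, Q₁` with `α` replaced by
`p₀ - q₀ + α`, whose value at `0` is `(p₀ - q₀ + α) P₁(0) Q₁(0)`. Neither `p - q + α` nor
`p₀ - q₀ + α` vanishes because `α` is not an integer.
-/

open Polynomial

namespace Polynomial

variable {R : Type*} [CommRing R]

/-- The numerator of `(z^c P/Q)'`, after clearing the factor `z^(c-1)/Q²`. -/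
noncomputable def critPointNumerator (c : R) (P Q : R[X]) : R[X] :=
  X * (derivative P * Q - P * derivative Q) + C c * (P * Q)

lemma critPointNumerator_eq (c : R) (P Q : R[X]) :
    critPointNumerator c P Q = X * derivative P * Q - P * (X * derivative Q) + C c * (P * Q) := by
  rw [critPointNumerator]; ring

lemma coeff_X_mul_derivative (A : R[X]) (k : ℕ) : (X * derivative A).coeff k = k * A.coeff k := by
  cases k with
  | zero => simp [mul_coeff_zero]
  | succ n => rw [coeff_X_mul, coeff_derivative]; push_cast; ring

lemma natDegree_X_mul_derivative_le (A : R[X]) : (X * derivative A).natDegree ≤ A.natDegree :=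
  natDegree_le_iff_coeff_eq_zero.mpr fun k hk => by
    rw [coeff_X_mul_derivative, coeff_eq_zero_of_natDegree_lt hk, mul_zero]

lemma natDegree_critPointNumerator_le (c : R) (P Q : R[X]) :
    (critPointNumerator c P Q).natDegree ≤ P.natDegree + Q.natDegree := by
  rw [critPointNumerator_eq]
  refine natDegree_add_le_of_degree_le ((natDegree_sub_le _ _).trans (max_le ?_ ?_)) ?_
  · exact natDegree_mul_le_of_le (natDegree_X_mul_derivative_le P) le_rfl
  · exact natDegree_mul_le_of_le le_rfl (natDegree_X_mul_derivative_le Q)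
  · exact (natDegree_C_mul_le _ _).trans natDegree_mul_le

lemma coeff_critPointNumerator_natDegree_add (c : R) (P Q : R[X]) :
    (critPointNumerator c P Q).coeff (P.natDegree + Q.natDegree) =
      ((P.natDegree : R) - Q.natDegree + c) * (P.leadingCoeff * Q.leadingCoeff) := by
  rw [critPointNumerator_eq, coeff_add, coeff_sub, coeff_C_mul,
    coeff_mul_add_eq_of_natDegree_le (natDegree_X_mul_derivative_le P) le_rfl,
    coeff_mul_add_eq_of_natDegree_le le_rfl (natDegree_X_mul_derivative_le Q),
    coeff_mul_add_eq_of_natDegree_le le_rfl le_rfl, coeff_X_mul_derivative, coeff_X_mul_derivative]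
  simp only [leadingCoeff]
  ring

theorem natDegree_critPointNumerator [NoZeroDivisors R] {c : R} {P Q : R[X]} (hP : P ≠ 0)
    (hQ : Q ≠ 0) (hc : (P.natDegree : R) - Q.natDegree + c ≠ 0) :
    (critPointNumerator c P Q).natDegree = P.natDegree + Q.natDegree := by
  refine natDegree_eq_of_le_of_coeff_ne_zero (natDegree_critPointNumerator_le c P Q) ?_
  rw [coeff_critPointNumerator_natDegree_add]
  exact mul_ne_zero hc (mul_ne_zero (leadingCoeff_ne_zero.mpr hP) (leadingCoeff_ne_zero.mpr hQ))

lemma X_mul_derivative_mul_X_pow (A : R[X]) (m : ℕ) :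
    X * derivative (A * X ^ m) = (X * derivative A + C (m : R) * A) * X ^ m := by
  cases m with
  | zero => simp
  | succ n => rw [derivative_mul, derivative_X_pow]; push_cast; ring

lemma critPointNumerator_mul_X_pow (c : R) (P Q : R[X]) (m n : ℕ) :
    critPointNumerator c (P * X ^ m) (Q * X ^ n) =
      critPointNumerator ((m : R) - n + c) P Q * X ^ (m + n) := by
  simp only [critPointNumerator_eq, X_mul_derivative_mul_X_pow, map_add, map_sub]
  ring

lemma eval_zero_critPointNumerator (c : R) (P Q : R[X]) :
    (critPointNumerator c P Q).eval 0 = c * (P.eval 0 * Q.eval 0) := by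
  simp [critPointNumerator]

lemma exists_eq_mul_X_pow_rootMultiplicity {P : R[X]} (hP : P ≠ 0) :
    ∃ P₁ : R[X], P = P₁ * X ^ rootMultiplicity 0 P ∧ P₁.eval 0 ≠ 0 := by
  obtain ⟨P₁, hP₁, hX⟩ := exists_eq_pow_rootMultiplicity_mul_and_not_dvd P hP 0
  rw [C_0, sub_zero] at hP₁ hX
  rw [X_dvd_iff, coeff_zero_eq_eval_zero] at hX
  exact ⟨P₁, hP₁.trans (mul_comm _ _), hX⟩

lemma rootMultiplicity_zero_mul_X_pow {S : R[X]} (hS : S.eval 0 ≠ 0) (k : ℕ) :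
    rootMultiplicity 0 (S * X ^ k) = k := by
  have hS₀ : S ≠ 0 := fun h => hS (by rw [h, eval_zero])
  rw [← sub_zero X, ← C_0, rootMultiplicity_mul_X_sub_C_pow hS₀, rootMultiplicity_eq_zero hS,
    zero_add]

theorem rootMultiplicity_zero_critPointNumerator [NoZeroDivisors R] {c : R} {P Q : R[X]}
    (hP : P ≠ 0) (hQ : Q ≠ 0)
    (hc : (rootMultiplicity 0 P : R) - rootMultiplicity 0 Q + c ≠ 0) :
    rootMultiplicity 0 (critPointNumerator c P Q) = rootMultiplicity 0 P + rootMultiplicity 0 Q := by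
  obtain ⟨P₁, hP₁, hP₁0⟩ := exists_eq_mul_X_pow_rootMultiplicity hP
  obtain ⟨Q₁, hQ₁, hQ₁0⟩ := exists_eq_mul_X_pow_rootMultiplicity hQ
  generalize rootMultiplicity 0 P = m at hP₁ hc
  generalize rootMultiplicity 0 Q = n at hQ₁ hc
  subst hP₁ hQ₁
  have hS : (critPointNumerator ((m : R) - n + c) P₁ Q₁).eval 0 ≠ 0 := by
    rw [eval_zero_critPointNumerator]
    exact mul_ne_zero hc (mul_ne_zero hP₁0 hQ₁0)
  rw [critPointNumerator_mul_X_pow, rootMultiplicity_zero_mul_X_pow hS]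

end Polynomial

lemma natCast_sub_natCast_add_ofReal_ne_zero {α : ℝ} (hα : α ∈ Set.Ioo 0 1) (m n : ℕ) :
    (m : ℂ) - n + α ≠ 0 := by
  intro h
  have hk : (((n : ℤ) - m : ℤ) : ℝ) = α := by
    have : (m : ℝ) - n + α = 0 := by exact_mod_cast h
    push_cast; linarith
  obtain ⟨h0, h1⟩ := hα
  rw [← hk] at h0 h1
  norm_cast at h0 h1
  omega

theorem critical_point_polynomial_degree_general (P Q : Polynomial ℂ) (α : ℝ)
    (hα : α ∈ Set.Ioo (0 : ℝ) 1)
    (hP : P ≠ 0) (hQ : Q ≠ 0)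
    (p q p₀ q₀ : ℕ) (hp : P.natDegree = p) (hq : Q.natDegree = q)
    (hp₀ : rootMultiplicity 0 P = p₀) (hq₀ : rootMultiplicity 0 Q = q₀) :
    (X * (derivative P * Q - P * derivative Q) + C (α : ℂ) * (P * Q)).natDegree = p + q ∧
    rootMultiplicity 0 (X * (derivative P * Q - P * derivative Q) + C (α : ℂ) * (P * Q))
      = p₀ + q₀ := by
  subst hp hq hp₀ hq₀
  exact ⟨natDegree_critPointNumerator hP hQ (natCast_sub_natCast_add_ofReal_ne_zero hα _ _),
    rootMultiplicity_zero_critPointNumerator hP hQ (natCast_sub_natCast_add_ofReal_ne_zero hα _ _)⟩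

/-- If `P/Q` is in lowest terms at `0` (i.e. `P(0) ≠ 0` or `Q(0) ≠ 0`),
`deg P = p`, `deg Q = q`, the root multiplicities of `P, Q` at `0` are
`p₀, q₀`, and `α ∈ (0,1)`, then `z(P'Q - PQ') + αPQ` has degree exactly
`p + q` and root multiplicity exactly `p₀ + q₀` at the origin. -/
theorem critical_point_polynomial_degree (P Q : Polynomial ℂ) (α : ℝ)
    (hα : α ∈ Set.Ioo (0 : ℝ) 1)
    (hP : P ≠ 0) (hQ : Q ≠ 0) (h0 : P.eval 0 ≠ 0 ∨ Q.eval 0 ≠ 0)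
    (p q p₀ q₀ : ℕ) (hp : P.natDegree = p) (hq : Q.natDegree = q)
    (hp₀ : rootMultiplicity 0 P = p₀) (hq₀ : rootMultiplicity 0 Q = q₀) :
    (X * (derivative P * Q - P * derivative Q) + C (α : ℂ) * (P * Q)).natDegree = p + q ∧
    rootMultiplicity 0 (X * (derivative P * Q - P * derivative Q) + C (α : ℂ) * (P * Q))
      = p₀ + q₀ :=
  critical_point_polynomial_degree_general P Q α hα hP hQ p q p₀ q₀ hp hq hp₀ hq₀
end

section
/- Let m be a positive integer. The number of chord diagrams in the upper half-plane, symmetric with respect to reflection z ↦ -z̄, with m vertices of degree 1 on the positive real ray (and their m mirror images on the negative ray), no vertices at 0 or ∞, equals the central binomial coefficient C(m, ⌊m/2⌋). -/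
/-!
A noncrossing perfect matching of points on a line is encoded by its Dyck word: a point is an
up-step if its partner lies to the right. Conversely, an up-step is matched with the down-step at
which the path first returns to its height, and the two constructions are inverse. The reflection
`z ↦ -z̄` reverses the points, so symmetric matchings correspond to Dyck words equal to their
reversed complement. Such a word is determined by its first half, which is an arbitrary path of
length `m` that stays nonnegative. Splitting off the first step, the nonnegative paths of length
`m` starting at height `k` number `∑_{j ≤ k} C(m, ⌊(m - k)/2⌋ + j)`, which is `C(m, ⌊m/2⌋)` for
`k = 0`.
-/

namespace SymmetricChordDiagram

open Finset

section Height

variable {n : ℕ}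

/-- A word is read as a lattice path: `true` is an up-step, `false` a down-step. Positions
`i ≥ n` contribute `0`, so `height w x` is constant for `x ≥ n`. -/
def step (w : Fin n → Bool) (i : ℕ) : ℤ :=
  if h : i < n then (if w ⟨i, h⟩ then 1 else -1) else 0

def height (w : Fin n → Bool) (x : ℕ) : ℤ :=
  ∑ i ∈ range x, step w i

@[simp] lemma height_zero (w : Fin n → Bool) : height w 0 = 0 := rfl

lemma height_succ (w : Fin n → Bool) (x : ℕ) : height w (x + 1) = height w x + step w x :=
  sum_range_succ _ _

lemma step_fin (w : Fin n → Bool) (i : Fin n) : step w i = if w i then 1 else -1 := by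
  simp [step]

lemma height_succ_of_true {w : Fin n → Bool} {i : Fin n} (h : w i = true) :
    height w (i + 1) = height w i + 1 := by
  rw [height_succ, step_fin, if_pos h]

lemma height_le_height_succ_add_one (w : Fin n → Bool) (x : ℕ) :
    height w x ≤ height w (x + 1) + 1 := by
  rw [height_succ, step]
  split_ifs <;> omega

lemma height_of_le {w : Fin n → Bool} {x : ℕ} (hx : n ≤ x) : height w x = height w n := by
  induction x, hx using Nat.le_induction with
  | base => rfl
  | succ x hx ih => rw [height_succ, ih, step, dif_neg (by omega), add_zero]

lemma height_sub_height (w : Fin n → Bool) {x y : ℕ} (hxy : x ≤ y) (hy : y ≤ n) :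
    height w y - height w x =
      ∑ i : Fin n with x ≤ i.val ∧ i.val < y, (if w i then 1 else -1 : ℤ) := by
  simp_rw [sum_filter, ← step_fin]
  rw [Fin.sum_univ_eq_sum_range (fun i => if x ≤ i ∧ i < y then step w i else 0), ← sum_filter,
    height, height, ← sum_Ico_eq_sub _ hxy]
  congr 1
  ext i
  simp only [mem_Ico, mem_filter, mem_range]
  omega

lemma height_length_sub_height_sub {w : Fin n → Bool} (hs : ∀ i, w (Fin.rev i) = !w i)
    {x : ℕ} (hx : x ≤ n) : height w n - height w (n - x) = -height w x := by
  rw [height_sub_height w (Nat.sub_le n x) le_rfl, ← sub_zero (height w x), ← height_zero w,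
    height_sub_height w (Nat.zero_le x) hx, ← sum_neg_distrib]
  refine sum_equiv Fin.revPerm (fun i => ?_) (fun i _ => ?_)
  · simp only [mem_filter, mem_univ, true_and, Fin.revPerm_apply, Fin.val_rev]
    omega
  · cases h : w i <;> simp [hs, h]

lemma height_length_eq_zero {w : Fin n → Bool} (hs : ∀ i, w (Fin.rev i) = !w i) :
    height w n = 0 := by
  have h := height_length_sub_height_sub hs le_rfl
  rw [Nat.sub_self, height_zero] at h
  omega

lemma height_length_sub {w : Fin n → Bool} (hs : ∀ i, w (Fin.rev i) = !w i) {x : ℕ}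
    (hx : x ≤ n) : height w (n - x) = height w x := by
  have h := height_length_sub_height_sub hs hx
  rw [height_length_eq_zero hs] at h
  omega

end Height

section Ballot

variable {m : ℕ}

abbrev Ballot (k : ℤ) (m : ℕ) : Type := {v : Fin m → Bool // ∀ x, 0 ≤ k + height v x}

lemma height_cons_succ (b : Bool) (v : Fin m → Bool) (x : ℕ) :
    height (Fin.cons b v : Fin (m + 1) → Bool) (x + 1) = (if b then 1 else -1) + height v x := by
  rw [height, sum_range_succ', add_comm]
  congr 1
  refine sum_congr rfl fun i _ => ?_
  by_cases hi : i < m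
  · simp [step, hi]
    rfl
  · simp [step, hi]

lemma ballot_cons_iff {k : ℤ} (hk : 0 ≤ k) (b : Bool) (v : Fin m → Bool) :
    (∀ x, 0 ≤ k + height (Fin.cons b v : Fin (m + 1) → Bool) x) ↔
      ∀ x, 0 ≤ k + (if b then 1 else -1) + height v x := by
  constructor
  · intro h x
    have := h (x + 1)
    rw [height_cons_succ] at this
    linarith
  · rintro h (_ | x)
    · simpa using hk
    · rw [height_cons_succ, ← add_assoc]
      exact h x

lemma isEmpty_ballot {k : ℤ} (hk : k < 0) : IsEmpty (Ballot k m) :=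
  ⟨fun v => absurd (v.2 0) (by simpa using hk)⟩

def ballotConsEquiv {k : ℤ} (hk : 0 ≤ k) :
    Ballot k (m + 1) ≃ Ballot (k + 1) m ⊕ Ballot (k - 1) m where
  toFun v :=
    have h := (ballot_cons_iff hk (v.1 0) (Fin.tail v.1)).1 (by rw [Fin.cons_self_tail]; exact v.2)
    if hb : v.1 0 then .inl ⟨Fin.tail v.1, by simpa [hb] using h⟩
    else .inr ⟨Fin.tail v.1, by simpa [hb, sub_eq_add_neg] using h⟩
  invFun
    | .inl v => ⟨Fin.cons true v.1, (ballot_cons_iff hk _ _).2 (by simpa using v.2)⟩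
    | .inr v =>
      ⟨Fin.cons false v.1, (ballot_cons_iff hk _ _).2 (by simpa [sub_eq_add_neg] using v.2)⟩
  left_inv v := by
    refine Subtype.ext ?_
    conv_rhs => rw [← Fin.cons_self_tail v.1]
    cases hb : v.1 0 <;> simp [hb]
  right_inv := by rintro (v | v) <;> simp

end Ballot

section BallotCount

lemma sum_range_choose_succ_succ (m a L : ℕ) :
    ∑ j ∈ range (L + 1), (m + 1).choose (a + 1 + j) =
      ∑ j ∈ range (L + 2), m.choose (a + j) + ∑ j ∈ range L, m.choose (a + 1 + j) := by
  simp_rw [add_right_comm a 1, Nat.choose_succ_succ', sum_add_distrib]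
  rw [sum_range_succ _ (L + 1), sum_range_succ (fun j => m.choose (a + j + 1)) L]
  ring_nf

lemma sum_range_choose_succ_zero (m L : ℕ) :
    ∑ j ∈ range (L + 1), (m + 1).choose j =
      ∑ j ∈ range L, m.choose j + ∑ j ∈ range (L + 1), m.choose j := by
  rw [sum_range_succ', sum_range_succ' (fun j => m.choose j)]
  simp_rw [Nat.choose_succ_succ', sum_add_distrib]
  simp only [Nat.choose_zero_right]
  ring

def ballotCount (m k : ℕ) : ℕ :=
  ∑ j ∈ range (k + 1), m.choose ((m - k) / 2 + j)

lemma ballotCount_zero_left (k : ℕ) : ballotCount 0 k = 1 := by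
  simp [ballotCount, sum_range_succ']

lemma ballotCount_zero_right (m : ℕ) : ballotCount m 0 = m.choose (m / 2) := by
  simp [ballotCount]

lemma ballotCount_succ_zero (m : ℕ) : ballotCount (m + 1) 0 = ballotCount m 1 := by
  rcases m with _ | m
  · rfl
  · have h := sum_range_choose_succ_succ (m + 1) (m / 2) 0
    simp only [ballotCount, Nat.sub_zero, zero_add, range_zero, sum_empty, add_zero] at h ⊢
    rw [show (m + 1 + 1) / 2 = m / 2 + 1 by omega, show (m + 1 - 1) / 2 = m / 2 by omega]
    exact h

lemma ballotCount_succ_succ (m k : ℕ) :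
    ballotCount (m + 1) (k + 1) = ballotCount m (k + 2) + ballotCount m k := by
  unfold ballotCount
  rcases le_or_gt m (k + 1) with h | h
  · rw [show (m + 1 - (k + 1)) / 2 = 0 by omega, show (m - (k + 2)) / 2 = 0 by omega,
      show (m - k) / 2 = 0 by omega, sum_range_succ _ (k + 2),
      Nat.choose_eq_zero_of_lt (show m < 0 + (k + 2) by omega)]
    simp only [zero_add, add_zero]
    exact (sum_range_choose_succ_zero m (k + 1)).trans (add_comm _ _)
  · obtain ⟨a, ha⟩ : ∃ a, (m - (k + 2)) / 2 = a := ⟨_, rfl⟩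
    rw [show (m + 1 - (k + 1)) / 2 = a + 1 by omega, ha, show (m - k) / 2 = a + 1 by omega]
    exact sum_range_choose_succ_succ m a (k + 1)

lemma card_ballot (m k : ℕ) : Nat.card (Ballot k m) = ballotCount m k := by
  induction m generalizing k with
  | zero =>
    rw [ballotCount_zero_left, Nat.card_eq_one_iff_unique]
    exact ⟨inferInstance, ⟨⟨Fin.elim0, fun x => by simp [height_of_le (Nat.zero_le x)]⟩⟩⟩
  | succ m ih =>
    rw [Nat.card_congr (ballotConsEquiv (Int.natCast_nonneg k)), Nat.card_sum]
    rcases k with _ | k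
    · have hempty := isEmpty_ballot (k := (0 : ℕ) - 1) (m := m) (by simp)
      rw [Nat.card_of_isEmpty (α := Ballot ((0 : ℕ) - 1) m), add_zero, ballotCount_succ_zero,
        ← ih 1]
      norm_num
    · rw [ballotCount_succ_succ, ← ih, ← ih]
      push_cast
      ring_nf

end BallotCount

section HalfWord

variable {m : ℕ}

def restrictHalf (w : Fin (2 * m) → Bool) : Fin m → Bool :=
  fun i => w (Fin.castLE (by omega) i)

def extendSymm (v : Fin m → Bool) : Fin (2 * m) → Bool :=
  fun i => if h : (i : ℕ) < m then v ⟨i, h⟩ else !v ⟨2 * m - 1 - i, by omega⟩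

lemma height_restrictHalf (w : Fin (2 * m) → Bool) {x : ℕ} (hx : x ≤ m) :
    height (restrictHalf w) x = height w x :=
  sum_congr rfl fun i hi => by
    rw [mem_range] at hi
    simp [step, restrictHalf, show i < m by omega, show i < 2 * m by omega]
    rfl

lemma height_extendSymm (v : Fin m → Bool) {x : ℕ} (hx : x ≤ m) :
    height (extendSymm v) x = height v x :=
  sum_congr rfl fun i hi => by
    rw [mem_range] at hi
    simp [step, extendSymm, show i < m by omega, show i < 2 * m by omega]

lemma extendSymm_rev (v : Fin m → Bool) (i : Fin (2 * m)) :
    extendSymm v (Fin.rev i) = !extendSymm v i := by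
  unfold extendSymm
  split_ifs with h1 h2 h2
  · simp [Fin.val_rev] at h1; omega
  · simp only [Bool.not_not]
    congr 1
    ext
    simp [Fin.val_rev]
    omega
  · congr 2
    ext
    simp [Fin.val_rev]
    omega
  · simp [Fin.val_rev] at h1; omega

lemma extendSymm_restrictHalf {w : Fin (2 * m) → Bool} (hs : ∀ i, w (Fin.rev i) = !w i) :
    extendSymm (restrictHalf w) = w := by
  funext i
  unfold extendSymm restrictHalf
  split_ifs with h
  · rfl
  · rw [← Bool.not_not (w i), ← hs i]
    congr 2
    ext
    simp [Fin.val_rev]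
    omega

lemma restrictHalf_extendSymm (v : Fin m → Bool) : restrictHalf (extendSymm v) = v := by
  funext i
  simp [restrictHalf, extendSymm]

lemma height_nonneg_iff_of_le_half {w : Fin (2 * m) → Bool} (hs : ∀ i, w (Fin.rev i) = !w i) :
    (∀ x, 0 ≤ height w x) ↔ ∀ x ≤ m, 0 ≤ height w x := by
  refine ⟨fun h x _ => h x, fun h x => ?_⟩
  rcases le_or_gt x m with hx | hx
  · exact h x hx
  rcases le_or_gt x (2 * m) with hx' | hx'
  · rw [← Nat.sub_sub_self hx', height_length_sub hs (by omega)]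
    exact h _ (by omega)
  · rw [height_of_le hx'.le, height_length_eq_zero hs]

def symmetricWordEquivBallot :
    {w : Fin (2 * m) → Bool // (∀ i, w (Fin.rev i) = !w i) ∧ ∀ x, 0 ≤ height w x} ≃
      Ballot 0 m where
  toFun w := ⟨restrictHalf w.1, fun x => by
    rw [zero_add]
    rcases le_or_gt x m with hx | hx
    · rw [height_restrictHalf _ hx]
      exact w.2.2 x
    · rw [height_of_le hx.le, height_restrictHalf _ le_rfl]
      exact w.2.2 m⟩
  invFun v := ⟨extendSymm v.1, extendSymm_rev v.1,
    (height_nonneg_iff_of_le_half (extendSymm_rev v.1)).2 fun x hx => by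
      rw [height_extendSymm _ hx]
      simpa using v.2 x⟩
  left_inv w := Subtype.ext (extendSymm_restrictHalf w.2.1)
  right_inv v := Subtype.ext (restrictHalf_extendSymm v.1)

end HalfWord

section OpenerWord

variable {n : ℕ}

structure IsNoncrossingMatching (σ : Equiv.Perm (Fin n)) : Prop where
  involutive : ∀ i, σ (σ i) = i
  ne_self : ∀ i, σ i ≠ i
  noncrossing : ∀ i j, ¬(i < j ∧ j < σ i ∧ σ i < σ j)

def openerWord (σ : Equiv.Perm (Fin n)) (i : Fin n) : Bool := decide (i < σ i)

namespace IsNoncrossingMatching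

variable {σ : Equiv.Perm (Fin n)}

lemma mapsTo_Ioo (hσ : IsNoncrossingMatching σ) (i : Fin n) :
    Set.MapsTo σ (Set.Ioo i (σ i)) (Set.Ioo i (σ i)) := by
  rintro x ⟨hx₁, hx₂⟩
  have hne₁ : σ x ≠ σ i := fun h => hx₁.ne' (σ.injective h)
  have hne₂ : σ x ≠ i := fun h => hx₂.ne (by rw [← h, hσ.involutive])
  refine ⟨lt_of_le_of_ne (not_lt.1 fun h => ?_) hne₂.symm,
    lt_of_le_of_ne (not_lt.1 fun h => ?_) hne₁⟩
  · exact hσ.noncrossing (σ x) i ⟨h, by rwa [hσ.involutive], by rwa [hσ.involutive]⟩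
  · exact hσ.noncrossing i x ⟨hx₁, hx₂, h⟩

lemma openerWord_apply (hσ : IsNoncrossingMatching σ) (i : Fin n) :
    openerWord σ (σ i) = !openerWord σ i := by
  simp only [openerWord, hσ.involutive]
  rw [← decide_not, decide_eq_decide, not_lt, (hσ.ne_self i).le_iff_lt]

lemma sum_eq_zero_of_mapsTo (hσ : IsNoncrossingMatching σ) {S : Finset (Fin n)}
    (hS : ∀ x ∈ S, σ x ∈ S) : ∑ x ∈ S, (if openerWord σ x then 1 else -1 : ℤ) = 0 :=
  sum_involution (fun x _ => σ x)
    (fun x _ => by cases h : openerWord σ x <;> simp [hσ.openerWord_apply, h])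
    (fun x _ _ => hσ.ne_self x) hS (fun x _ => hσ.involutive x)

lemma height_succ_apply (hσ : IsNoncrossingMatching σ) {i : Fin n} (hi : i < σ i) :
    height (openerWord σ) (σ i + 1) = height (openerWord σ) i := by
  have h := height_sub_height (openerWord σ) (x := i) (y := σ i + 1)
    (by rw [Fin.lt_def] at hi; omega) (σ i).isLt
  rw [hσ.sum_eq_zero_of_mapsTo] at h
  · omega
  intro x hx
  simp only [mem_filter, mem_univ, true_and, Nat.lt_succ_iff, ← Fin.le_def] at hx ⊢
  rcases hx.1.eq_or_lt with rfl | h₁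
  · exact ⟨hi.le, le_rfl⟩
  rcases hx.2.eq_or_lt with rfl | h₂
  · rw [hσ.involutive]
    exact ⟨le_rfl, hi.le⟩
  · exact (hσ.mapsTo_Ioo i ⟨h₁, h₂⟩).imp le_of_lt le_of_lt

lemma height_le_height (hσ : IsNoncrossingMatching σ) {a y : ℕ} (hay : a ≤ y)
    (h : ∀ t : Fin n, a ≤ t → (t : ℕ) < y → σ t < t → a ≤ σ t) :
    height (openerWord σ) a ≤ height (openerWord σ) y := by
  induction y using Nat.strong_induction_on with
  | _ y ih =>
  rcases hay.eq_or_lt with rfl | hay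
  · exact le_rfl
  obtain ⟨t, rfl⟩ : ∃ t, y = t + 1 := ⟨y - 1, by omega⟩
  have ih' := ih t (by omega) (by omega) fun s hs₁ hs₂ => h s hs₁ (by omega)
  by_cases ht : t < n
  · obtain ⟨T, rfl⟩ : ∃ T : Fin n, (T : ℕ) = t := ⟨⟨t, ht⟩, rfl⟩
    rcases lt_or_gt_of_ne (hσ.ne_self T) with hcl | hop
    · have hcl' : (σ T : ℕ) < T := hcl
      have hσT : σ T < σ (σ T) := by rwa [hσ.involutive]
      rw [← hσ.involutive T, hσ.height_succ_apply hσT]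
      exact ih _ (by omega) (h T (by omega) (by omega) hcl) fun s hs₁ hs₂ => h s hs₁ (by omega)
    · rw [height_succ_of_true (by simpa [openerWord] using hop)]
      omega
  · rw [height_succ, step, dif_neg ht]
    omega

lemma height_nonneg (hσ : IsNoncrossingMatching σ) (x : ℕ) : 0 ≤ height (openerWord σ) x :=
  hσ.height_le_height (Nat.zero_le x) fun _ _ _ _ => Nat.zero_le _

lemma height_lt_height (hσ : IsNoncrossingMatching σ) {i : Fin n} (hi : i < σ i) {y : ℕ}
    (hy₁ : (i : ℕ) < y) (hy₂ : y ≤ σ i) :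
    height (openerWord σ) i < height (openerWord σ) y := by
  have hup := height_succ_of_true (w := openerWord σ) (i := i) (by simpa [openerWord] using hi)
  have := hσ.height_le_height (a := i + 1) (y := y) hy₁ fun t ht₁ ht₂ _ =>
    (hσ.mapsTo_Ioo i ⟨Fin.lt_def.2 ht₁, Fin.lt_def.2 (by omega)⟩).1
  omega

end IsNoncrossingMatching

lemma openerWord_rev {σ : Equiv.Perm (Fin n)} (hne : ∀ i, σ i ≠ i)
    (hrev : ∀ i, σ (Fin.rev i) = Fin.rev (σ i)) (i : Fin n) :
    openerWord σ (Fin.rev i) = !openerWord σ i := by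
  simp only [openerWord, hrev, Fin.rev_lt_rev]
  rw [← decide_not, decide_eq_decide, not_lt, (hne i).le_iff_lt]

end OpenerWord

section ReturnTime

variable {n : ℕ} {w : Fin n → Bool}

noncomputable def returnTime (w : Fin n → Bool) (i : ℕ) : ℕ :=
  sInf {x | i < x ∧ height w x ≤ height w i}

lemma returnTime_le {i x : ℕ} (hx : i < x) (h : height w x ≤ height w i) :
    returnTime w i ≤ x :=
  Nat.sInf_le ⟨hx, h⟩

lemma height_lt_of_lt_returnTime {i y : ℕ} (hy : i < y) (hyr : y < returnTime w i) :
    height w i < height w y :=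
  lt_of_not_ge fun h => Nat.notMem_of_lt_sInf hyr ⟨hy, h⟩

lemma returnTime_eq {i x : ℕ} (hx : i < x) (h : height w x ≤ height w i)
    (hmin : ∀ y, i < y → y < x → height w i < height w y) : returnTime w i = x := by
  refine le_antisymm (returnTime_le hx h) (not_lt.1 fun hlt => ?_)
  obtain ⟨hr, hrh⟩ := Nat.sInf_mem (s := {x | i < x ∧ height w x ≤ height w i}) ⟨x, hx, h⟩
  exact (hmin _ hr hlt).not_ge hrh

/-- For an up-step `i`, the down-step that first brings the path back to the height at `i`. -/
noncomputable def closer (hd : ∀ x, height w n ≤ height w x) (i : Fin n) : Fin n :=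
  ⟨returnTime w i - 1, by have := returnTime_le i.isLt (hd i); have := i.isLt; omega⟩

variable {hd : ∀ x, height w n ≤ height w x} {i : Fin n}

lemma succ_lt_returnTime (hd : ∀ x, height w n ≤ height w x) (hi : w i = true) :
    (i : ℕ) + 1 < returnTime w i := by
  obtain ⟨hr, hrh⟩ := Nat.sInf_mem (s := {x | (i : ℕ) < x ∧ height w x ≤ height w i})
    ⟨n, i.isLt, hd i⟩
  refine lt_of_le_of_ne hr fun h => ?_
  change height w (returnTime w i) ≤ _ at hrh
  rw [← h, height_succ_of_true hi] at hrh
  omega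

lemma height_returnTime (hd : ∀ x, height w n ≤ height w x) (hi : w i = true) :
    height w (returnTime w i) = height w i := by
  have hr := succ_lt_returnTime hd hi
  have hle : height w (returnTime w i) ≤ height w i :=
    (Nat.sInf_mem (s := {x | (i : ℕ) < x ∧ height w x ≤ height w i}) ⟨n, i.isLt, hd i⟩).2
  have hprev := height_lt_of_lt_returnTime (w := w) (i := i) (y := returnTime w i - 1)
    (by omega) (by omega)
  have hstep := height_le_height_succ_add_one w (returnTime w i - 1)
  rw [Nat.sub_add_cancel (by omega)] at hstep
  omega

lemma lt_closer (hi : w i = true) : i < closer hd i := by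
  have := succ_lt_returnTime hd hi
  rw [Fin.lt_def, closer]
  dsimp only
  omega

lemma closer_eq_false (hi : w i = true) : w (closer hd i) = false := by
  by_contra h
  have hr := succ_lt_returnTime hd hi
  have hprev := height_lt_of_lt_returnTime (w := w) (i := i) (y := closer hd i) (lt_closer hi)
    (by simp only [closer]; omega)
  have hup := height_succ_of_true (Bool.not_eq_false _ ▸ h)
  rw [show (closer hd i : ℕ) + 1 = returnTime w i by simp only [closer]; omega,
    height_returnTime hd hi] at hup
  omega

lemma closer_le_closer (hi : w i = true) {j : Fin n} (hij : i < j) (hj : j < closer hd i) :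
    closer hd j ≤ closer hd i := by
  have hr := succ_lt_returnTime hd hi
  rw [Fin.lt_def] at hij hj
  simp only [closer, Fin.mk_le_mk] at hj ⊢
  have := returnTime_le (w := w) (i := j) (x := returnTime w i) (by omega)
    ((height_returnTime hd hi).trans_lt (height_lt_of_lt_returnTime hij (by omega))).le
  omega

end ReturnTime

section WordMatching

variable {n : ℕ} {w : Fin n → Bool}

lemma closer_rev_closer (hs : ∀ i, w (Fin.rev i) = !w i) {hd : ∀ x, height w n ≤ height w x}
    {i : Fin n} (hi : w i = true) : closer hd (Fin.rev (closer hd i)) = Fin.rev i := by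
  have hr := succ_lt_returnTime hd hi
  have hrn := returnTime_le i.isLt (hd i)
  ext
  simp only [closer, Fin.val_rev]
  rw [show n - (returnTime w i - 1 + 1) = n - returnTime w i by omega,
    returnTime_eq (x := n - i) (by omega) ?_ ?_]
  · omega
  · rw [height_length_sub hs i.isLt.le, height_length_sub hs hrn, height_returnTime hd hi]
  · intro y hy₁ hy₂
    rw [height_length_sub hs hrn, height_returnTime hd hi,
      ← Nat.sub_sub_self (show y ≤ n by omega), height_length_sub hs (by omega)]
    exact height_lt_of_lt_returnTime (by omega) (by omega)

lemma height_length_le (hs : ∀ i, w (Fin.rev i) = !w i) (hp : ∀ x, 0 ≤ height w x) (x : ℕ) :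
    height w n ≤ height w x := by
  rw [height_length_eq_zero hs]
  exact hp x

/-- A down-step is matched through the mirror symmetry of `w`, which makes the matching commute
with `Fin.rev` by construction. -/
noncomputable def wordMatching (hs : ∀ i, w (Fin.rev i) = !w i) (hp : ∀ x, 0 ≤ height w x)
    (i : Fin n) : Fin n :=
  if w i then closer (height_length_le hs hp) i
  else Fin.rev (closer (height_length_le hs hp) (Fin.rev i))

variable {hs : ∀ i, w (Fin.rev i) = !w i} {hp : ∀ x, 0 ≤ height w x}

lemma wordMatching_of_true {i : Fin n} (hi : w i = true) :
    wordMatching hs hp i = closer (height_length_le hs hp) i := by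
  simp [wordMatching, hi]

lemma wordMatching_rev (i : Fin n) :
    wordMatching hs hp (Fin.rev i) = Fin.rev (wordMatching hs hp i) := by
  cases hi : w i <;> simp [wordMatching, hs, hi]

lemma wordMatching_lt_of_false {i : Fin n} (hi : w i = false) : wordMatching hs hp i < i := by
  have h := lt_closer (hd := height_length_le hs hp) (show w (Fin.rev i) = true by simp [hs, hi])
  rw [← Fin.rev_lt_rev, Fin.rev_rev] at h
  simpa [wordMatching, hi] using h

lemma lt_wordMatching_of_true {i : Fin n} (hi : w i = true) : i < wordMatching hs hp i := by
  rw [wordMatching_of_true hi]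
  exact lt_closer hi

lemma lt_wordMatching_iff {i : Fin n} : i < wordMatching hs hp i ↔ w i = true := by
  cases hi : w i
  · simpa using (wordMatching_lt_of_false hi).le
  · simpa using lt_wordMatching_of_true hi

lemma wordMatching_ne (i : Fin n) : wordMatching hs hp i ≠ i := by
  cases hi : w i
  · exact (wordMatching_lt_of_false hi).ne
  · exact (lt_wordMatching_of_true hi).ne'

lemma wordMatching_wordMatching_of_true {i : Fin n} (hi : w i = true) :
    wordMatching hs hp (wordMatching hs hp i) = i := by
  rw [wordMatching_of_true hi, wordMatching, if_neg (by simp [closer_eq_false hi]),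
    closer_rev_closer hs hi, Fin.rev_rev]

lemma wordMatching_involutive : Function.Involutive (wordMatching hs hp) := by
  intro i
  cases hi : w i
  · have hri : w (Fin.rev i) = true := by simp [hs, hi]
    rw [← Fin.rev_rev i, wordMatching_rev, wordMatching_rev, wordMatching_wordMatching_of_true hri]
  · exact wordMatching_wordMatching_of_true hi

lemma wordMatching_noncrossing (i j : Fin n) :
    ¬(i < j ∧ j < wordMatching hs hp i ∧ wordMatching hs hp i < wordMatching hs hp j) := by
  rintro ⟨hij, hj, hji⟩
  have hi : w i = true := lt_wordMatching_iff.1 (hij.trans hj)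
  have hj' : w j = true := lt_wordMatching_iff.1 (hj.trans hji)
  rw [wordMatching_of_true hi, wordMatching_of_true hj'] at hji
  rw [wordMatching_of_true hi] at hj
  exact (closer_le_closer hi hij hj).not_gt hji

lemma openerWord_wordMatching :
    openerWord (wordMatching_involutive (hs := hs) (hp := hp)).toPerm = w := by
  funext i
  simp [openerWord, lt_wordMatching_iff]

lemma wordMatching_openerWord {σ : Equiv.Perm (Fin n)} (hσ : IsNoncrossingMatching σ)
    (hrev : ∀ i, σ (Fin.rev i) = Fin.rev (σ i)) :
    wordMatching (openerWord_rev hσ.ne_self hrev) hσ.height_nonneg = σ := by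
  have hopen : ∀ i, i < σ i →
      wordMatching (openerWord_rev hσ.ne_self hrev) hσ.height_nonneg i = σ i := by
    intro i hi
    rw [wordMatching_of_true (by simpa [openerWord] using hi)]
    ext
    rw [Fin.lt_def] at hi
    simp only [closer]
    rw [returnTime_eq (x := σ i + 1) (by omega) (hσ.height_succ_apply hi).le
      fun y hy₁ hy₂ => hσ.height_lt_height hi hy₁ (by omega)]
    simp
  funext i
  rcases lt_or_gt_of_ne (hσ.ne_self i) with hcl | hi
  · have h := hopen (σ i) (by rwa [hσ.involutive])
    rw [hσ.involutive] at h
    conv_lhs => rw [← h]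
    exact wordMatching_involutive _
  · exact hopen i hi

noncomputable def symmetricMatchingEquivWord (n : ℕ) :
    {σ : Equiv.Perm (Fin n) // (∀ i, σ (σ i) = i) ∧ (∀ i, σ i ≠ i) ∧
      (∀ i j : Fin n, ¬(i < j ∧ j < σ i ∧ σ i < σ j)) ∧ ∀ i, σ (Fin.rev i) = Fin.rev (σ i)} ≃
    {w : Fin n → Bool // (∀ i, w (Fin.rev i) = !w i) ∧ ∀ x, 0 ≤ height w x} where
  toFun σ := ⟨openerWord σ.1, openerWord_rev σ.2.2.1 σ.2.2.2.2,
    IsNoncrossingMatching.height_nonneg ⟨σ.2.1, σ.2.2.1, σ.2.2.2.1⟩⟩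
  invFun w := ⟨(wordMatching_involutive (hs := w.2.1) (hp := w.2.2)).toPerm,
    wordMatching_involutive (hs := w.2.1) (hp := w.2.2),
    wordMatching_ne (hs := w.2.1) (hp := w.2.2),
    wordMatching_noncrossing (hs := w.2.1) (hp := w.2.2),
    wordMatching_rev (hs := w.2.1) (hp := w.2.2)⟩
  left_inv σ := Subtype.ext <| Equiv.ext fun i =>
    congrFun (wordMatching_openerWord ⟨σ.2.1, σ.2.2.1, σ.2.2.2.1⟩ σ.2.2.2.2) i
  right_inv w := Subtype.ext (openerWord_wordMatching (hs := w.2.1) (hp := w.2.2))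

end WordMatching

end SymmetricChordDiagram

open SymmetricChordDiagram

/-- The `2m` points are encoded as `Fin (2m)` (the first `m` being the negative points), the
reflection `z ↦ -z̄` as `Fin.rev`, and the diagram as a fixed-point-free noncrossing involution
commuting with the reflection. -/
theorem symmetric_noncrossing_matchings_card_general (m : ℕ) :
    Nat.card {σ : Equiv.Perm (Fin (2 * m)) //
      (∀ i, σ (σ i) = i) ∧ (∀ i, σ i ≠ i) ∧
      (∀ i j : Fin (2 * m), ¬(i < j ∧ j < σ i ∧ σ i < σ j)) ∧
      ∀ i, σ (Fin.rev i) = Fin.rev (σ i)} =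
    m.choose (m / 2) := by
  rw [Nat.card_congr ((symmetricMatchingEquivWord (2 * m)).trans symmetricWordEquivBallot)]
  exact (card_ballot m 0).trans (ballotCount_zero_right m)

/-- The number of symmetric chord diagrams with `m` degree-one vertices on the
positive ray and their `m` mirror images (no vertices at `0` or `∞`) equals
`C(m, ⌊m/2⌋)`.  The `2m` points are encoded as `Fin (2m)` (the first `m`
being the negative points), the reflection `z ↦ -z̄` as `Fin.rev`, and the
diagram as a fixed-point-free noncrossing involution commuting with the
reflection. -/
theorem symmetric_noncrossing_matchings_card (m : ℕ) (hm : 0 < m) :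
    Nat.card {σ : Equiv.Perm (Fin (2 * m)) //
      (∀ i, σ (σ i) = i) ∧ (∀ i, σ i ≠ i) ∧
      (∀ i j : Fin (2 * m), ¬(i < j ∧ j < σ i ∧ σ i < σ j)) ∧
      ∀ i, σ (Fin.rev i) = Fin.rev (σ i)} =
    m.choose (m / 2) :=
  symmetric_noncrossing_matchings_card_general m
end

section
/- If m₀ > 2(m₁ + … + m_{n-2}), then every symmetric chord diagram with degrees m₀ at 0, m_j at the positive vertices a_j (1 ≤ j ≤ n-2) and their mirror images, and m_{n-1} at ∞, has no crossing edges; consequently E(m₀, m₁, …, m_{n-2}, m_{n-1}) = K(m₀/2, m₁, …, m_{n-2}, m_{n-1}/2). -/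
/-- Vertex of the end in position `x`, for a diagram whose consecutive
vertices have the degrees listed in `L`. -/
def vertexOf : List ℕ → ℕ → ℕ
  | [], _ => 0
  | m :: L, x => if x < m then 0 else vertexOf L (x - m) + 1

/-- A chord diagram on a set of linearly ordered arc-ends with vertex degree
list `L`: a fixed-point-free noncrossing involution joining ends at distinct
vertices. -/
def IsChordDiagram (L : List ℕ) (σ : Equiv.Perm (Fin L.sum)) : Prop :=
  (∀ i, σ (σ i) = i) ∧ (∀ i, σ i ≠ i) ∧
  (∀ i j, ¬(i < j ∧ j < σ i ∧ σ i < σ j)) ∧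
  ∀ i : Fin L.sum, vertexOf L (i : ℕ) ≠ vertexOf L ((σ i : ℕ))

/-- The number of chord diagrams with vertex degree list `L`
(for two-row contents this is the Kostka number `K(L)`). -/
noncomputable def chordCount (L : List ℕ) : ℕ :=
  Nat.card {σ : Equiv.Perm (Fin L.sum) // IsChordDiagram L σ}

/-- The reflection `z ↦ -z̄` on the circle of `N` arc-ends, the first `m₀` of
which sit at the vertex `0`:  `x ↦ (m₀ - 1 - x) mod N`. -/
def reflEnd (m₀ : ℕ) {N : ℕ} (x : Fin N) : Fin N :=
  ⟨(m₀ + N - 1 - (x : ℕ)) % N, Nat.mod_lt _ x.pos⟩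

/-- The degree list of a symmetric diagram: `m₀` ends at `0`, the positive
vertices `L`, `minf` ends at `∞`, then the mirror (negative) vertices. -/
def symList (m₀ : ℕ) (L : List ℕ) (minf : ℕ) : List ℕ :=
  m₀ :: (L ++ minf :: L.reverse)

/-- The number `E(m₀, L, minf)` of chord diagrams symmetric under the
reflection `z ↦ -z̄`, with degrees `m₀` at `0`, `minf` at `∞`, and `L` at the
positive vertices. -/
noncomputable def symCount (m₀ : ℕ) (L : List ℕ) (minf : ℕ) : ℕ :=
  Nat.card {σ : Equiv.Perm (Fin (symList m₀ L minf).sum) //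
    IsChordDiagram (symList m₀ L minf) σ ∧
    ∀ i, σ (reflEnd m₀ i) = reflEnd m₀ (σ i)}

/-!
Cut the circle of arc-ends through the middle of the ends at `0` and of the ends at `∞`. The
reflection exchanges the two halves and reverses the cyclic order, so a chord joining the halves
would cross its own mirror image; hence it is its own mirror image `{x, r x}`. At `0` or `∞` such a
chord would join a vertex to itself, and at a positive vertex it would enclose all `m₀` ends at `0`,
which could then only be paired with the `2(x - m₀) < 2(m₁ + … + m_{n-2}) < m₀` ends lying between
the chord and `0`. So a symmetric diagram is a diagram on the half
`[m₀/2, m₁, …, m_{n-2}, m_{n-1}/2]` together with its mirror image, and conversely.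
-/

theorem vertexOf_cons_of_lt {m x : ℕ} (L : List ℕ) (h : x < m) : vertexOf (m :: L) x = 0 := by
  simp [vertexOf, h]

theorem vertexOf_cons_of_le {m x : ℕ} (L : List ℕ) (h : m ≤ x) :
    vertexOf (m :: L) x = vertexOf L (x - m) + 1 := by
  simp [vertexOf, Nat.not_lt.2 h]

theorem vertexOf_append_of_lt : ∀ {L : List ℕ} (L' : List ℕ) {x : ℕ}, x < L.sum →
    vertexOf (L ++ L') x = vertexOf L x
  | [], _, _, h => by simp at h
  | m :: L, L', x, h => by
    rcases lt_or_ge x m with hx | hx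
    · rw [List.cons_append, vertexOf_cons_of_lt _ hx, vertexOf_cons_of_lt _ hx]
    · rw [List.sum_cons] at h
      rw [List.cons_append, vertexOf_cons_of_le _ hx, vertexOf_cons_of_le _ hx,
        vertexOf_append_of_lt L' (by omega)]

theorem vertexOf_append_of_le : ∀ {L : List ℕ} (L' : List ℕ) {x : ℕ}, L.sum ≤ x →
    vertexOf (L ++ L') x = L.length + vertexOf L' (x - L.sum)
  | [], _, _, _ => by simp
  | m :: L, L', x, h => by
    rw [List.sum_cons] at h ⊢
    rw [List.cons_append, vertexOf_cons_of_le _ (by omega), vertexOf_append_of_le L' (by omega),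
      List.length_cons, Nat.sub_sub]
    omega

theorem vertexOf_lt_length : ∀ {L : List ℕ} {x : ℕ}, x < L.sum → vertexOf L x < L.length
  | [], _, h => by simp at h
  | m :: L, x, h => by
    rcases lt_or_ge x m with hx | hx
    · simp [vertexOf_cons_of_lt _ hx]
    · rw [List.sum_cons] at h
      rw [vertexOf_cons_of_le _ hx, List.length_cons]
      exact Nat.succ_lt_succ (vertexOf_lt_length (by omega))

theorem vertexOf_reverse_add : ∀ {L : List ℕ} {x : ℕ}, x < L.sum →
    vertexOf L.reverse (L.sum - 1 - x) + vertexOf L x + 1 = L.length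
  | [], _, h => by simp at h
  | m :: L, x, h => by
    rw [List.sum_cons] at h ⊢
    rw [List.reverse_cons, List.length_cons]
    rcases lt_or_ge x m with hx | hx
    · rw [vertexOf_cons_of_lt _ hx, vertexOf_append_of_le _ (by rw [List.sum_reverse]; omega),
        vertexOf_cons_of_lt _ (by rw [List.sum_reverse]; omega), List.length_reverse]
    · have ih := vertexOf_reverse_add (L := L) (x := x - m) (by omega)
      rw [vertexOf_cons_of_le _ hx,
        vertexOf_append_of_lt _ (by rw [List.sum_reverse]; omega),
        show m + L.sum - 1 - x = L.sum - 1 - (x - m) by omega]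
      omega

theorem sum_symList (m₀ : ℕ) (L : List ℕ) (minf : ℕ) :
    (symList m₀ L minf).sum = m₀ + L.sum + minf + L.sum := by
  simp only [symList, List.sum_cons, List.sum_append, List.sum_reverse]
  omega

theorem le_sum_symList (m₀ : ℕ) (L : List ℕ) (minf : ℕ) : m₀ ≤ (symList m₀ L minf).sum := by
  rw [sum_symList]
  omega

section symList

variable {m₀ minf x : ℕ} {L : List ℕ}

theorem vertexOf_symList_of_lt (h : x < m₀) : vertexOf (symList m₀ L minf) x = 0 :=
  vertexOf_cons_of_lt _ h

theorem vertexOf_symList_positive (h₁ : m₀ ≤ x) (h₂ : x < m₀ + L.sum) :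
    vertexOf (symList m₀ L minf) x = vertexOf L (x - m₀) + 1 := by
  rw [symList, vertexOf_cons_of_le _ h₁, vertexOf_append_of_lt _ (by omega)]

theorem vertexOf_symList_infinity (h₁ : m₀ + L.sum ≤ x) (h₂ : x < m₀ + L.sum + minf) :
    vertexOf (symList m₀ L minf) x = L.length + 1 := by
  rw [symList, vertexOf_cons_of_le _ (by omega), vertexOf_append_of_le _ (by omega),
    vertexOf_cons_of_lt _ (by omega)]

theorem vertexOf_symList_negative (h : m₀ + L.sum + minf ≤ x) :
    vertexOf (symList m₀ L minf) x
      = L.length + 2 + vertexOf L.reverse (x - (m₀ + L.sum + minf)) := by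
  rw [symList, vertexOf_cons_of_le _ (by omega), vertexOf_append_of_le _ (by omega),
    vertexOf_cons_of_le _ (by omega), show x - m₀ - L.sum - minf = x - (m₀ + L.sum + minf) by omega]
  omega

end symList

section reflEnd

variable {m₀ N : ℕ}

theorem val_reflEnd (hm : m₀ ≤ N) (x : Fin N) :
    ((x : ℕ) < m₀ → (reflEnd m₀ x : ℕ) = m₀ - 1 - x) ∧
      (m₀ ≤ x → (reflEnd m₀ x : ℕ) = m₀ + N - 1 - x) := by
  have hx := x.isLt
  constructor
  · intro h
    show (m₀ + N - 1 - x) % N = _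
    rw [show m₀ + N - 1 - (x : ℕ) = m₀ - 1 - x + N by omega, Nat.add_mod_right,
      Nat.mod_eq_of_lt (by omega)]
  · intro h
    exact Nat.mod_eq_of_lt (by omega)

theorem reflEnd_involutive (hm : m₀ ≤ N) : Function.Involutive (reflEnd m₀ : Fin N → Fin N) := by
  intro x
  have := val_reflEnd hm x
  have := val_reflEnd hm (reflEnd m₀ x)
  ext
  omega

theorem sbtw_reflEnd (hm : m₀ ≤ N) {a b c : Fin N} (h : sbtw a b c) :
    sbtw (reflEnd m₀ c) (reflEnd m₀ b) (reflEnd m₀ a) := by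
  have := val_reflEnd hm a
  have := val_reflEnd hm b
  have := val_reflEnd hm c
  rw [Fin.sbtw_iff] at h ⊢
  omega

end reflEnd

section Noncrossing

variable {N : ℕ} {σ : Equiv.Perm (Fin N)} (hinv : Function.Involutive σ)
  (hnc : ∀ i j, ¬(i < j ∧ j < σ i ∧ σ i < σ j))
include hinv hnc

/-- The linear noncrossing condition is a cyclic one: chords never interleave around the circle. -/
theorem not_sbtw_of_noncrossing {a b c d : Fin N} (hac : σ a = c) (hbd : σ b = d)
    (habc : sbtw a b c) (hcda : sbtw c d a) : False := by
  have hca : σ c = a := hac ▸ hinv a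
  have hdb : σ d = b := hbd ▸ hinv b
  rw [Fin.sbtw_iff] at habc hcda
  rcases habc with ⟨h₁, h₂⟩ | ⟨h₁, h₂⟩ | ⟨h₁, h₂⟩ <;>
    rcases hcda with ⟨h₃, h₄⟩ | ⟨h₃, h₄⟩ | ⟨h₃, h₄⟩ <;>
    first
    | omega
    | exact hnc a b (by rw [hac, hbd]; omega)
    | exact hnc b c (by rw [hbd, hca]; omega)
    | exact hnc c d (by rw [hca, hdb]; omega)
    | exact hnc d a (by rw [hdb, hac]; omega)

/-- The ends below `m ≤ a` that are paired above `m` must avoid the chord `{a, b}` and everything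
it encloses, leaving only the ends in `[m, a)` and `(b, N)`. -/
theorem le_outside_of_noncrossing {a b : Fin N} (hab : a < b) (hσ : σ a = b) {m : ℕ}
    (hm : m ≤ a) (hA : ∀ i : Fin N, (i : ℕ) < m → m ≤ σ i) :
    m ≤ (a - m) + (N - 1 - b) := by
  let m' : Fin N := ⟨m, by omega⟩
  have hmaps : Set.MapsTo σ (Finset.Iio m' : Set (Fin N)) (↑(Finset.Ico m' a ∪ Finset.Ioi b)) := by
    intro i hi
    simp only [Finset.coe_Iio, Set.mem_Iio, Finset.coe_union, Finset.coe_Ico, Finset.coe_Ioi,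
      Set.mem_union, Set.mem_Ico, Set.mem_Ioi, Fin.lt_def, Fin.le_def, m'] at hi ⊢
    have hi' := hA i hi
    have hne_a : σ i ≠ a := fun h => by
      have := hinv i
      rw [h, hσ] at this
      omega
    have hne_b : σ i ≠ b := fun h => by
      have := σ.injective (h.trans hσ.symm)
      omega
    by_contra hout
    exact not_sbtw_of_noncrossing hinv hnc hσ (hinv i) (by rw [Fin.sbtw_iff]; omega)
      (by rw [Fin.sbtw_iff]; omega)
  calc m = (Finset.Iio m').card := (Fin.card_Iio m').symm
    _ ≤ (Finset.Ico m' a ∪ Finset.Ioi b).card :=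
      Finset.card_le_card_of_injOn σ hmaps σ.injective.injOn
    _ ≤ (Finset.Ico m' a).card + (Finset.Ioi b).card := Finset.card_union_le _ _
    _ = (a - m) + (N - 1 - b) := by rw [Fin.card_Ico, Fin.card_Ioi]

end Noncrossing

/-- The reflection exchanges the window `[M, M + n)` with its complement and reverses the cyclic
order, so a chord leaving the window crosses its mirror image unless the two coincide. -/
theorem apply_eq_reflEnd_of_leaves_window {N M n : ℕ} (hN : N = n + n) (hM : M ≤ n)
    {σ : Equiv.Perm (Fin N)} (hinv : Function.Involutive σ)
    (hnc : ∀ i j, ¬(i < j ∧ j < σ i ∧ σ i < σ j))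
    (hsym : ∀ i, σ (reflEnd (M + M) i) = reflEnd (M + M) (σ i))
    {x : Fin N} (hx₁ : M ≤ x) (hx₂ : x < M + n) (hout : σ x < M ∨ M + n ≤ σ x) :
    σ x = reflEnd (M + M) x := by
  by_contra hne
  rw [Fin.ext_iff] at hne
  have hry : σ (reflEnd (M + M) (σ x)) = reflEnd (M + M) x := by rw [hsym, hinv]
  have := val_reflEnd (m₀ := M + M) (by omega) x
  have := val_reflEnd (m₀ := M + M) (by omega) (σ x)
  obtain ⟨h₁, h₂⟩ | ⟨h₁, h₂⟩ :
      (sbtw x (reflEnd (M + M) (σ x)) (σ x) ∧ sbtw (σ x) (reflEnd (M + M) x) x) ∨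
      (sbtw x (reflEnd (M + M) x) (σ x) ∧ sbtw (σ x) (reflEnd (M + M) (σ x)) x) := by
    simp only [Fin.sbtw_iff, Fin.lt_def]
    omega
  · exact not_sbtw_of_noncrossing hinv hnc rfl hry h₁ h₂
  · exact not_sbtw_of_noncrossing hinv hnc rfl (hsym x) h₁ h₂

theorem IsChordDiagram.apply_mem_window {M mi : ℕ} {L : List ℕ} (hbig : 2 * L.sum < M + M)
    {σ : Equiv.Perm (Fin (symList (M + M) L (mi + mi)).sum)}
    (hσ : IsChordDiagram (symList (M + M) L (mi + mi)) σ)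
    (hsym : ∀ i, σ (reflEnd (M + M) i) = reflEnd (M + M) (σ i))
    {x : Fin (symList (M + M) L (mi + mi)).sum} (hx₁ : M ≤ x) (hx₂ : x < M + M + L.sum + mi) :
    M ≤ σ x ∧ σ x < M + M + L.sum + mi := by
  obtain ⟨hinv, -, hnc, hvert⟩ := hσ
  have hN := sum_symList (M + M) L (mi + mi)
  have hr := val_reflEnd (le_sum_symList _ _ _) x
  by_contra hout
  have hx : σ x = reflEnd (M + M) x :=
    apply_eq_reflEnd_of_leaves_window (n := M + L.sum + mi) (by omega) (by omega) hinv hnc hsym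
      hx₁ (by omega) (by omega)
  have hv := hvert x
  rw [hx] at hv
  rcases lt_or_ge (x : ℕ) (M + M) with h₁ | h₁
  · exact hv (by rw [vertexOf_symList_of_lt h₁, vertexOf_symList_of_lt (by omega)])
  rcases lt_or_ge (x : ℕ) (M + M + L.sum) with h₂ | h₂
  · have hA : ∀ i : Fin _, (i : ℕ) < M + M → M + M ≤ σ i := fun i hi => by
      by_contra h
      exact hvert i (by rw [vertexOf_symList_of_lt hi, vertexOf_symList_of_lt (by omega)])
    have := le_outside_of_noncrossing hinv hnc (by rw [Fin.lt_def]; omega) hx h₁ hA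
    omega
  · exact hv (by rw [vertexOf_symList_infinity h₂ (by omega),
      vertexOf_symList_infinity (by omega) (by omega)])

theorem sbtw_iff_of_strictMono {n N : ℕ} {f : Fin n → Fin N} (hf : StrictMono f) {a b c : Fin n} :
    sbtw (f a) (f b) (f c) ↔ sbtw a b c := by
  simp only [Fin.sbtw_iff, hf.lt_iff_lt]

theorem IsChordDiagram.of_strictMono {L L' : List ℕ} {σ : Equiv.Perm (Fin L.sum)}
    (hσ : IsChordDiagram L σ) {τ : Equiv.Perm (Fin L'.sum)} (f : Fin L'.sum → Fin L.sum)
    (hf : StrictMono f) (hvert : ∀ k, vertexOf L (f k) = vertexOf L' k)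
    (hcomm : ∀ k, σ (f k) = f (τ k)) : IsChordDiagram L' τ := by
  obtain ⟨hinv, hfix, hnc, hv⟩ := hσ
  refine ⟨fun k => hf.injective ?_, fun k h => hfix (f k) (by rw [hcomm, h]),
    fun i j h => hnc (f i) (f j) ?_, fun k => ?_⟩
  · rw [← hcomm, ← hcomm, hinv]
  · simpa only [hcomm, hf.lt_iff_lt] using h
  · rw [← hvert, ← hvert, ← hcomm]
    exact hv (f k)

abbrev halfList (M : ℕ) (L : List ℕ) (mi : ℕ) : List ℕ := M :: (L ++ [mi])

theorem sum_halfList (M : ℕ) (L : List ℕ) (mi : ℕ) : (halfList M L mi).sum = M + L.sum + mi := by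
  simp only [List.sum_cons, List.sum_append, List.sum_nil, add_zero]
  omega

section Split

variable {M : ℕ} {L : List ℕ} {mi : ℕ}

/-- The ends of the half diagram occupy the window `[M, M + M + L.sum + mi)`: the upper half of the
ends at `0`, the positive vertices, and the first half of the ends at `∞`. -/
def halfEnd (k : Fin (halfList M L mi).sum) : Fin (symList (M + M) L (mi + mi)).sum :=
  ⟨M + k, by have := k.isLt.trans_eq (sum_halfList M L mi); rw [sum_symList]; omega⟩

@[simp]
theorem val_halfEnd (k : Fin (halfList M L mi).sum) : (halfEnd k : ℕ) = M + k := rfl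

theorem halfEnd_strictMono : StrictMono (halfEnd : Fin (halfList M L mi).sum → _) :=
  fun a b h => by simp only [Fin.lt_def, val_halfEnd] at h ⊢; omega

theorem exists_eq_halfEnd {y : Fin (symList (M + M) L (mi + mi)).sum} (h₁ : M ≤ y)
    (h₂ : y < M + M + L.sum + mi) : ∃ k : Fin (halfList M L mi).sum, y = halfEnd k :=
  ⟨⟨y - M, by rw [sum_halfList]; omega⟩, Fin.ext (by simp only [val_halfEnd]; omega)⟩

theorem reflEnd_halfEnd_lt_or_le (k : Fin (halfList M L mi).sum) :
    reflEnd (M + M) (halfEnd k) < M ∨ M + M + L.sum + mi ≤ reflEnd (M + M) (halfEnd k) := by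
  have hk := k.isLt.trans_eq (sum_halfList M L mi)
  have hN := sum_symList (M + M) L (mi + mi)
  have := val_reflEnd (le_sum_symList _ _ _) (halfEnd k)
  simp only [val_halfEnd] at this ⊢
  omega

theorem vertexOf_halfEnd (k : Fin (halfList M L mi).sum) :
    vertexOf (symList (M + M) L (mi + mi)) (halfEnd k) = vertexOf (halfList M L mi) k := by
  have hk := k.isLt.trans_eq (sum_halfList M L mi)
  rw [val_halfEnd]
  rcases lt_or_ge (k : ℕ) M with h₁ | h₁
  · rw [vertexOf_symList_of_lt (by omega), vertexOf_cons_of_lt _ h₁]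
  rw [vertexOf_cons_of_le _ h₁]
  rcases lt_or_ge (k : ℕ) (M + L.sum) with h₂ | h₂
  · rw [vertexOf_symList_positive (by omega) (by omega), vertexOf_append_of_lt _ (by omega),
      show M + k - (M + M) = k - M by omega]
  · rw [vertexOf_symList_infinity (by omega) (by omega), vertexOf_append_of_le _ (by omega),
      vertexOf_cons_of_lt _ (by omega)]

/-- Reflection fixes the vertices `0` and `∞ = l + 1` and exchanges the `j`-th positive vertex `j`
with the `j`-th negative vertex `2 l + 2 - j`. -/
def mirrorVertex (l v : ℕ) : ℕ := if v = 0 then 0 else 2 * l + 2 - v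

theorem vertexOf_reflEnd_halfEnd (k : Fin (halfList M L mi).sum) :
    vertexOf (symList (M + M) L (mi + mi)) (reflEnd (M + M) (halfEnd k))
      = mirrorVertex L.length (vertexOf (symList (M + M) L (mi + mi)) (halfEnd k)) := by
  have hk := k.isLt.trans_eq (sum_halfList M L mi)
  have hN := sum_symList (M + M) L (mi + mi)
  have hr := val_reflEnd (le_sum_symList _ _ _) (halfEnd k)
  simp only [val_halfEnd] at hr ⊢
  unfold mirrorVertex
  rcases lt_or_ge (k : ℕ) M with h₁ | h₁
  · rw [vertexOf_symList_of_lt (by omega), vertexOf_symList_of_lt (by omega), if_pos rfl]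
  rcases lt_or_ge (k : ℕ) (M + L.sum) with h₂ | h₂
  · have := vertexOf_reverse_add (L := L) (x := k - M) (by omega)
    rw [vertexOf_symList_negative (by omega), vertexOf_symList_positive (by omega) (by omega),
      if_neg (by omega), show M + k - (M + M) = k - M by omega,
      show (reflEnd (M + M) (halfEnd k) : ℕ) - (M + M + L.sum + (mi + mi))
        = L.sum - 1 - (k - M) by omega]
    omega
  · rw [vertexOf_symList_infinity (by omega) (by omega),
      vertexOf_symList_infinity (by omega) (by omega), if_neg (by omega)]
    omega

theorem mirrorVertex_injOn {l v w : ℕ} (hv : v ≤ l + 1) (hw : w ≤ l + 1)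
    (h : mirrorVertex l v = mirrorVertex l w) : v = w := by
  unfold mirrorVertex at h
  split_ifs at h <;> omega

variable (M L mi) in
noncomputable def splitEquiv :
    Fin (halfList M L mi).sum ⊕ Fin (halfList M L mi).sum ≃ Fin (symList (M + M) L (mi + mi)).sum :=
  Equiv.ofBijective (Sum.elim halfEnd (reflEnd (M + M) ∘ halfEnd)) <| by
    rw [Fintype.bijective_iff_injective_and_card]
    refine ⟨?_, by simp only [Fintype.card_sum, Fintype.card_fin, sum_halfList, sum_symList]; ring⟩
    rintro (a | a) (b | b) h <;> simp only [Sum.elim_inl, Sum.elim_inr, Function.comp_apply] at h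
    · rw [halfEnd_strictMono.injective h]
    · have hb := reflEnd_halfEnd_lt_or_le b
      have := a.isLt.trans_eq (sum_halfList M L mi)
      rw [← h, val_halfEnd] at hb
      omega
    · have ha := reflEnd_halfEnd_lt_or_le a
      have := b.isLt.trans_eq (sum_halfList M L mi)
      rw [h, val_halfEnd] at ha
      omega
    · rw [halfEnd_strictMono.injective ((reflEnd_involutive (le_sum_symList _ _ _)).injective h)]

theorem halfEnd_or_reflEnd_halfEnd (x : Fin (symList (M + M) L (mi + mi)).sum) :
    (∃ k, halfEnd k = x) ∨ ∃ k, reflEnd (M + M) (halfEnd k) = x := by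
  obtain ⟨k | k, rfl⟩ := (splitEquiv M L mi).surjective x
  exacts [.inl ⟨k, rfl⟩, .inr ⟨k, rfl⟩]

end Split

section Unfold

variable {M : ℕ} {L : List ℕ} {mi : ℕ}

noncomputable def unfoldPerm (τ : Equiv.Perm (Fin (halfList M L mi).sum)) :
    Equiv.Perm (Fin (symList (M + M) L (mi + mi)).sum) :=
  (splitEquiv M L mi).permCongr (τ.sumCongr τ)

variable (τ : Equiv.Perm (Fin (halfList M L mi).sum))

@[simp]
theorem unfoldPerm_halfEnd (k : Fin (halfList M L mi).sum) :
    unfoldPerm τ (halfEnd k) = halfEnd (τ k) := by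
  rw [unfoldPerm, Equiv.permCongr_apply, show halfEnd k = splitEquiv M L mi (.inl k) from rfl,
    Equiv.symm_apply_apply]
  rfl

@[simp]
theorem unfoldPerm_reflEnd_halfEnd (k : Fin (halfList M L mi).sum) :
    unfoldPerm τ (reflEnd (M + M) (halfEnd k)) = reflEnd (M + M) (halfEnd (τ k)) := by
  rw [unfoldPerm, Equiv.permCongr_apply,
    show reflEnd (M + M) (halfEnd k) = splitEquiv M L mi (.inr k) from rfl, Equiv.symm_apply_apply]
  rfl

theorem unfoldPerm_reflEnd (x : Fin (symList (M + M) L (mi + mi)).sum) :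
    unfoldPerm τ (reflEnd (M + M) x) = reflEnd (M + M) (unfoldPerm τ x) := by
  have hr := reflEnd_involutive (le_sum_symList (M + M) L (mi + mi))
  rcases halfEnd_or_reflEnd_halfEnd x with ⟨k, rfl⟩ | ⟨k, rfl⟩
  · simp
  · simp [hr _]

variable {τ}

theorem unfoldPerm_noncrossing (hinv : Function.Involutive τ)
    (hnc : ∀ i j, ¬(i < j ∧ j < τ i ∧ τ i < τ j)) :
    ∀ i j, ¬(i < j ∧ j < unfoldPerm τ i ∧ unfoldPerm τ i < unfoldPerm τ j) := by
  have hm := le_sum_symList (M + M) L (mi + mi)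
  have hwindow : ∀ a b, sbtw (halfEnd a) (halfEnd b) (halfEnd (τ a)) →
      sbtw (halfEnd (τ a)) (halfEnd (τ b)) (halfEnd a) → False := fun a b h₁ h₂ =>
    not_sbtw_of_noncrossing hinv hnc rfl rfl ((sbtw_iff_of_strictMono halfEnd_strictMono).1 h₁)
      ((sbtw_iff_of_strictMono halfEnd_strictMono).1 h₂)
  rintro i j ⟨hij, hj, hji⟩
  rcases halfEnd_or_reflEnd_halfEnd i with ⟨a, rfl⟩ | ⟨a, rfl⟩ <;>
    rcases halfEnd_or_reflEnd_halfEnd j with ⟨b, rfl⟩ | ⟨b, rfl⟩ <;>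
    simp only [unfoldPerm_halfEnd, unfoldPerm_reflEnd_halfEnd] at hj hji
  · exact hwindow a b (Fin.sbtw_iff.2 (.inl ⟨hij, hj⟩)) 
      (Fin.sbtw_iff.2 (.inr (.inr ⟨hij.trans hj, hji⟩)))
  · have := reflEnd_halfEnd_lt_or_le b
    have := (τ a).isLt.trans_eq (sum_halfList M L mi)
    simp only [Fin.lt_def, val_halfEnd] at hij hj
    omega
  · have := reflEnd_halfEnd_lt_or_le (τ a)
    have := (τ b).isLt.trans_eq (sum_halfList M L mi)
    simp only [Fin.lt_def, val_halfEnd] at hj hji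
    omega
  · -- the reflection carries a crossing outside the window to one inside it
    have h₁ := sbtw_reflEnd hm (Fin.sbtw_iff.2 (.inl ⟨hij, hj⟩))
    have h₂ := sbtw_reflEnd hm (Fin.sbtw_iff.2 (.inr (.inr ⟨hij.trans hj, hji⟩)))
    simp only [reflEnd_involutive hm _] at h₁ h₂
    exact hwindow (τ a) b (by rwa [hinv]) (by rwa [hinv])

theorem IsChordDiagram.unfoldPerm (hτ : IsChordDiagram (halfList M L mi) τ) :
    IsChordDiagram (symList (M + M) L (mi + mi)) (unfoldPerm τ) := by
  obtain ⟨hinv, hfix, hnc, hvert⟩ := hτ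
  have hr := reflEnd_involutive (le_sum_symList (M + M) L (mi + mi))
  refine ⟨fun x => ?_, fun x => ?_, unfoldPerm_noncrossing hinv hnc, fun x => ?_⟩ <;>
    rcases halfEnd_or_reflEnd_halfEnd x with ⟨k, rfl⟩ | ⟨k, rfl⟩
  · rw [unfoldPerm_halfEnd, unfoldPerm_halfEnd, hinv]
  · rw [unfoldPerm_reflEnd_halfEnd, unfoldPerm_reflEnd_halfEnd, hinv]
  · rw [unfoldPerm_halfEnd]
    exact fun h => hfix k (halfEnd_strictMono.injective h)
  · rw [unfoldPerm_reflEnd_halfEnd]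
    exact fun h => hfix k (halfEnd_strictMono.injective (hr.injective h))
  · rw [unfoldPerm_halfEnd, vertexOf_halfEnd, vertexOf_halfEnd]
    exact hvert k
  · have hk := vertexOf_lt_length k.isLt
    have hτk := vertexOf_lt_length (τ k).isLt
    simp only [List.length_cons, List.length_append, List.length_nil] at hk hτk
    rw [unfoldPerm_reflEnd_halfEnd, vertexOf_reflEnd_halfEnd, vertexOf_reflEnd_halfEnd,
      vertexOf_halfEnd, vertexOf_halfEnd]
    exact fun h => hvert k (mirrorVertex_injOn (by omega) (by omega) h)

end Unfold

section Fold

variable {M : ℕ} {L : List ℕ} {mi : ℕ} {σ : Equiv.Perm (Fin (symList (M + M) L (mi + mi)).sum)}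

noncomputable def foldPerm (hinv : Function.Involutive σ)
    (hW : ∀ k : Fin (halfList M L mi).sum, ∃ k', σ (halfEnd k) = halfEnd k') :
    Equiv.Perm (Fin (halfList M L mi).sum) :=
  Function.Involutive.toPerm (fun k => (hW k).choose) fun k =>
    halfEnd_strictMono.injective <| by
      rw [← (hW (hW k).choose).choose_spec, ← (hW k).choose_spec, hinv]

theorem halfEnd_foldPerm (hinv : Function.Involutive σ)
    (hW : ∀ k : Fin (halfList M L mi).sum, ∃ k', σ (halfEnd k) = halfEnd k')
    (k : Fin (halfList M L mi).sum) : halfEnd (foldPerm hinv hW k) = σ (halfEnd k) :=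
  (hW k).choose_spec.symm

theorem unfoldPerm_foldPerm (hinv : Function.Involutive σ)
    (hW : ∀ k : Fin (halfList M L mi).sum, ∃ k', σ (halfEnd k) = halfEnd k')
    (hsym : ∀ i, σ (reflEnd (M + M) i) = reflEnd (M + M) (σ i)) :
    unfoldPerm (foldPerm hinv hW) = σ := by
  ext1 x
  rcases halfEnd_or_reflEnd_halfEnd x with ⟨k, rfl⟩ | ⟨k, rfl⟩
  · rw [unfoldPerm_halfEnd, halfEnd_foldPerm]
  · rw [unfoldPerm_reflEnd_halfEnd, halfEnd_foldPerm, hsym]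

end Fold

theorem symCount_eq_chordCount_halfList {M : ℕ} {L : List ℕ} {mi : ℕ} (hbig : 2 * L.sum < M + M) :
    symCount (M + M) L (mi + mi) = chordCount (halfList M L mi) := by
  refine (Nat.card_eq_of_bijective
    (fun τ => ⟨unfoldPerm τ.1, τ.2.unfoldPerm, unfoldPerm_reflEnd τ.1⟩) ⟨?_, ?_⟩).symm
  · rintro ⟨τ, _⟩ ⟨τ', _⟩ h
    refine Subtype.ext (Equiv.ext fun k => halfEnd_strictMono.injective ?_)
    rw [← unfoldPerm_halfEnd, ← unfoldPerm_halfEnd]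
    exact congrArg (fun σ => σ.1 (halfEnd k)) h
  · rintro ⟨σ, hσ, hsym⟩
    have hW : ∀ k : Fin (halfList M L mi).sum, ∃ k', σ (halfEnd k) = halfEnd k' := fun k => by
      have hk := k.isLt.trans_eq (sum_halfList M L mi)
      obtain ⟨h₁, h₂⟩ := hσ.apply_mem_window hbig hsym (x := halfEnd k)
        (by rw [val_halfEnd]; omega) (by rw [val_halfEnd]; omega)
      exact exists_eq_halfEnd h₁ h₂
    refine ⟨⟨foldPerm hσ.1 hW, hσ.of_strictMono halfEnd halfEnd_strictMono vertexOf_halfEnd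
      fun k => (halfEnd_foldPerm hσ.1 hW k).symm⟩, Subtype.ext (unfoldPerm_foldPerm hσ.1 hW hsym)⟩

/-- If `m₀ > 2(m₁ + … + m_{n-2})`, then a symmetric chord diagram with
degrees `m₀` at `0`, `L = [m₁, …, m_{n-2}]` at the positive vertices and
`minf` at `∞` has no crossing edges, and consequently
`E(m₀, m₁, …, m_{n-2}, minf) = K(m₀/2, m₁, …, m_{n-2}, minf/2)`. -/
theorem no_crossing_and_split (m₀ minf : ℕ) (L : List ℕ)
    (h₀ : Even m₀) (hinf : Even minf) (hbig : 2 * L.sum < m₀) :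
    (∀ σ : Equiv.Perm (Fin (symList m₀ L minf).sum),
      IsChordDiagram (symList m₀ L minf) σ →
      (∀ i, σ (reflEnd m₀ i) = reflEnd m₀ (σ i)) →
      ∀ x : Fin (symList m₀ L minf).sum, m₀ ≤ (x : ℕ) → (x : ℕ) < m₀ + L.sum →
        ((σ x : ℕ)) < m₀ + L.sum + minf) ∧
    symCount m₀ L minf = chordCount (m₀ / 2 :: (L ++ [minf / 2])) := by
  obtain ⟨M, rfl⟩ := h₀
  obtain ⟨mi, rfl⟩ := hinf
  refine ⟨fun σ hσ hsym x hx₁ hx₂ => ?_, ?_⟩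
  · have := (hσ.apply_mem_window hbig hsym (x := x) (by omega) (by omega)).2
    omega
  · rw [show (M + M) / 2 = M by omega, show (mi + mi) / 2 = mi by omega]
    exact symCount_eq_chordCount_halfList hbig
end
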